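/- Under the assumptions that S ⪰ 0 has positive diagonal and Λ has positive off-diagonal entries, the function f(X) = −log det X + tr(SX) + ‖X‖_{1,Λ} has a unique minimizer X* over the cone of symmetric positive definite matrices. -/

import Mathlib

open Matrix BigOperators

/-- Weighted elementwise ℓ1 norm `‖X‖_{1,Λ} = Σᵢⱼ Λᵢⱼ|Xᵢⱼ|`. -/
noncomputable def norm1 {p : ℕ} (Λ X : Matrix (Fin p) (Fin p) ℝ) : ℝ :=
  ∑ i, ∑ j, Λ i j * |X i j|

/-- The regularized negative log-likelihood `f(X) = −log det X + tr(SX) + ‖X‖_{1,Λ}`. -/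
noncomputable def fobj {p : ℕ} (S Λ X : Matrix (Fin p) (Fin p) ℝ) : ℝ :=
  -Real.log X.det + Matrix.trace (S * X) + norm1 Λ X

/-!
Existence: on the positive semidefinite cone, `tr(SX) + ‖X‖_{1,Λ}` is positive away from `0`
(off-diagonal entries are charged by `Λ`, diagonal ones by the diagonal of `S`), so by homogeneity
and compactness of the unit sphere it dominates `c‖X‖`. As `log det X ≤ a tr X - p(1 + log a)`,
every sublevel set of `f` is bounded, and on it `det X ≥ exp(-F)`; hence it lies in a compact
subset of the open cone, where `f` is continuous and attains its minimum.

Uniqueness: `-log det` is strictly convex on the cone (writing `X = Bᴴ B`, this reduces to strict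
concavity of `log` on the eigenvalues of `B⁻ᴴ Y B⁻¹`), and the other two terms are convex.
-/

open Real Set
open scoped MatrixOrder

theorem exists_pos_mul_norm_le_of_homogeneous {E : Type*} [NormedAddCommGroup E] [NormedSpace ℝ E]
    [ProperSpace E] {C : Set E} (hC : IsClosed C) (hCsmul : ∀ x ∈ C, ∀ t : ℝ, 0 < t → t • x ∈ C)
    {g : E → ℝ} (hg : Continuous g) (hhom : ∀ x, ∀ t : ℝ, 0 ≤ t → g (t • x) = t * g x)
    (hpos : ∀ x ∈ C, x ≠ 0 → 0 < g x) :
    ∃ c, 0 < c ∧ ∀ x ∈ C, c * ‖x‖ ≤ g x := by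
  obtain ⟨c, hc, hcC⟩ := ((isCompact_sphere (0 : E) 1).inter_left hC).exists_forall_le'
    hg.continuousOn fun x hx => hpos x hx.1 (ne_zero_of_mem_unit_sphere ⟨x, hx.2⟩)
  refine ⟨c, hc, fun x hxC => ?_⟩
  rcases eq_or_ne x 0 with rfl | hx0
  · have hg0 : g 0 = 0 := by simpa using hhom 0 0 le_rfl
    simp [hg0]
  have hx : 0 < ‖x‖ := norm_pos_iff.2 hx0
  have hunit := hcC (‖x‖⁻¹ • x) ⟨hCsmul x hxC ‖x‖⁻¹ (inv_pos.2 hx), by simp [norm_smul, hx.ne']⟩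
  rw [hhom x _ (inv_nonneg.2 hx.le), le_inv_mul_iff₀ hx] at hunit
  linarith

theorem exists_isMinOn_of_isCompact_of_sublevel_subset {E α : Type*} [TopologicalSpace E]
    [LinearOrder α] [TopologicalSpace α] [ClosedIicTopology α] {s K : Set E} {f : E → α}
    {x₀ : E} (hK : IsCompact K) (hKs : K ⊆ s) (hf : ContinuousOn f K) (hx₀ : x₀ ∈ s)
    (hsub : ∀ x ∈ s, f x ≤ f x₀ → x ∈ K) :
    ∃ x ∈ s, IsMinOn f s x := by
  have hx₀K := hsub x₀ hx₀ le_rfl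
  obtain ⟨x, hxK, hmin⟩ := hK.exists_isMinOn ⟨x₀, hx₀K⟩ hf
  refine ⟨x, hKs hxK, fun y hy => ?_⟩
  by_cases hy₀ : f y ≤ f x₀
  · exact hmin (hsub y hy hy₀)
  · exact (hmin hx₀K).trans (le_of_not_ge hy₀)

namespace Matrix

theorem convex_setOf_posDef {n : Type*} [Fintype n] :
    Convex ℝ {X : Matrix n n ℝ | X.PosDef} :=
  convex_iff_forall_pos.2 fun _ hX _ hY _ _ ha hb _ => (hX.smul ha).add (hY.smul hb)

theorem isClosed_setOf_posSemidef {n : Type*} [Fintype n] :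
    IsClosed {X : Matrix n n ℝ | X.PosSemidef} := by
  simp only [posSemidef_iff_dotProduct_mulVec, Set.ofPred_and, Set.ofPred_forall]
  exact (isClosed_eq continuous_id.matrix_conjTranspose continuous_id).inter <|
    isClosed_iInter fun x => isClosed_le continuous_const <|
      continuous_const.dotProduct (continuous_id.matrix_mulVec continuous_const)

section
attribute [local instance] Matrix.normedAddCommGroup

theorem trace_le_card_mul_norm {n : Type*} [Fintype n] (X : Matrix n n ℝ) :
    X.trace ≤ Fintype.card n * ‖X‖ := by
  rw [trace, ← nsmul_eq_mul, ← Finset.card_univ, ← Finset.sum_const]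
  exact Finset.sum_le_sum fun i _ => (le_abs_self _).trans (norm_entry_le_entrywise_sup_norm X)

end

variable {n : Type*} [Fintype n] [DecidableEq n]

theorem PosSemidef.trace_mul_nonneg {S X : Matrix n n ℝ} (hS : S.PosSemidef)
    (hX : X.PosSemidef) : 0 ≤ (S * X).trace := by
  obtain ⟨B, rfl⟩ := CStarAlgebra.nonneg_iff_eq_star_mul_self.mp hS.nonneg
  rw [mul_assoc, trace_mul_comm]
  exact (hX.mul_mul_conjTranspose_same B).trace_nonneg

theorem PosDef.log_det_le {X : Matrix n n ℝ} (hX : X.PosDef) {a : ℝ} (ha : 0 < a) :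
    log X.det ≤ a * X.trace - Fintype.card n * (1 + log a) := by
  have hμ := hX.eigenvalues_pos
  calc log X.det = ∑ i, log (hX.1.eigenvalues i) := by
        simp [hX.1.det_eq_prod_eigenvalues, log_prod fun i _ => (hμ i).ne']
    _ ≤ ∑ i, (a * hX.1.eigenvalues i - (1 + log a)) := Finset.sum_le_sum fun i _ => by
        have hlog := log_le_sub_one_of_pos (mul_pos ha (hμ i))
        rw [log_mul ha.ne' (hμ i).ne'] at hlog
        linarith
    _ = a * X.trace - Fintype.card n * (1 + log a) := by
        simp [hX.1.trace_eq_sum_eigenvalues, Finset.sum_sub_distrib, Finset.mul_sum, mul_add]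

theorem det_conjStarAlgAut (U : unitary (Matrix n n ℝ)) (N : Matrix n n ℝ) :
    (Unitary.conjStarAlgAut ℝ _ U N).det = N.det := by
  rw [Unitary.conjStarAlgAut_apply, det_mul, det_mul, mul_right_comm, ← det_mul,
    Unitary.mul_star_self_of_mem U.2, det_one, one_mul]

theorem IsHermitian.det_smul_one_add_smul {M : Matrix n n ℝ} (hM : M.IsHermitian) (a b : ℝ) :
    (a • 1 + b • M).det = ∏ i, (a + b * hM.eigenvalues i) := by
  conv_lhs => rw [hM.spectral_theorem,
    ← map_one (Unitary.conjStarAlgAut ℝ _ hM.eigenvectorUnitary), ← map_smul, ← map_smul,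
    ← map_add, det_conjStarAlgAut, ← diagonal_one, ← diagonal_smul, ← diagonal_smul,
    diagonal_add, det_diagonal]
  simp

theorem IsHermitian.eq_one_of_eigenvalues_eq_one {M : Matrix n n ℝ} (hM : M.IsHermitian)
    (h : ∀ i, hM.eigenvalues i = 1) : M = 1 := by
  rw [hM.spectral_theorem, ← map_one (Unitary.conjStarAlgAut ℝ _ hM.eigenvectorUnitary),
    ← diagonal_one]
  congr 2
  ext i
  simp [h i]

theorem PosDef.mul_log_det_lt_log_det_smul_one_add_smul {M : Matrix n n ℝ} (hM : M.PosDef)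
    (hM1 : M ≠ 1) {a b : ℝ} (ha : 0 < a) (hb : 0 < b) (hab : a + b = 1) :
    b * log M.det < log (a • 1 + b • M).det := by
  set ν := hM.1.eigenvalues
  have hν : ∀ i, 0 < ν i := hM.eigenvalues_pos
  obtain ⟨i, hi⟩ : ∃ i, ν i ≠ 1 := by
    by_contra! h
    exact hM1 (hM.1.eq_one_of_eigenvalues_eq_one h)
  rw [hM.1.det_eq_prod_eigenvalues, hM.1.det_smul_one_add_smul, log_prod, log_prod,
    Finset.mul_sum]
  · refine Finset.sum_lt_sum (fun j _ => ?_) ⟨i, Finset.mem_univ i, ?_⟩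
    · simpa using strictConcaveOn_log_Ioi.concaveOn.2 (mem_Ioi.2 one_pos)
        (mem_Ioi.2 (hν j)) ha.le hb.le hab
    · simpa using strictConcaveOn_log_Ioi.2 (mem_Ioi.2 one_pos) (mem_Ioi.2 (hν i))
        hi.symm ha hb hab
  · exact fun j _ => (add_pos ha (mul_pos hb (hν j))).ne'
  · exact fun j _ => (hν j).ne'

theorem PosDef.exists_eq_star_mul_self {X : Matrix n n ℝ} (hX : X.PosDef) :
    ∃ B : (Matrix n n ℝ)ˣ, X = star B.1 * B := by
  obtain ⟨B, hB, rfl⟩ :=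
    CStarAlgebra.isStrictlyPositive_iff_eq_star_mul_self.mp hX.isStrictlyPositive
  exact ⟨hB.unit, rfl⟩

theorem strictConcaveOn_log_det :
    StrictConcaveOn ℝ {X : Matrix n n ℝ | X.PosDef} (fun X => log X.det) := by
  refine ⟨convex_setOf_posDef, fun X hX Y hY hXY a b ha hb hab => ?_⟩
  obtain ⟨B, rfl⟩ := hX.exists_eq_star_mul_self
  set M : Matrix n n ℝ := star (B⁻¹).1 * Y * (B⁻¹).1
  have hM : M.PosDef := (IsUnit.posDef_star_left_conjugate_iff B⁻¹.isUnit).2 hY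
  have hYM : Y = star B.1 * M * B := by
    simp only [M, ← mul_assoc, ← star_mul, B.inv_mul, star_one, one_mul]
    simp [mul_assoc]
  have hdet (N : Matrix n n ℝ) : (star B.1 * N * B).det = (star B.1 * B).det * N.det := by
    simp only [det_mul]
    ring
  have hcomb : a • (star B.1 * B) + b • Y = star B.1 * (a • 1 + b • M) * B := by
    simp [hYM, mul_add, add_mul]
  have hM1 : M ≠ 1 := fun h => hXY (by simp [hYM, h])
  have hδ : 0 < (star B.1 * B).det := hX.det_pos
  have hcomb_pos : 0 < (a • 1 + b • M).det := ((PosDef.one.smul ha).add (hM.smul hb)).det_pos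
  have key := hM.mul_log_det_lt_log_det_smul_one_add_smul hM1 ha hb hab
  simp only [smul_eq_mul]
  rw [hcomb, hdet, log_mul hδ.ne' hcomb_pos.ne', hYM, hdet, log_mul hδ.ne' hM.det_pos.ne']
  linear_combination key + log (star B.1 * B).det * hab

end Matrix

section Objective

variable {p : ℕ} {S Λ : Matrix (Fin p) (Fin p) ℝ}

theorem norm1_nonneg (hΛ : ∀ i j, 0 ≤ Λ i j) (X : Matrix (Fin p) (Fin p) ℝ) : 0 ≤ norm1 Λ X :=
  Finset.sum_nonneg fun i _ => Finset.sum_nonneg fun j _ => mul_nonneg (hΛ i j) (abs_nonneg _)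

theorem norm1_smul (Λ X : Matrix (Fin p) (Fin p) ℝ) {t : ℝ} (ht : 0 ≤ t) :
    norm1 Λ (t • X) = t * norm1 Λ X := by
  simp only [norm1, Finset.mul_sum, Matrix.smul_apply, smul_eq_mul, abs_mul, abs_of_nonneg ht,
    mul_left_comm]

theorem norm1_add_le (hΛ : ∀ i j, 0 ≤ Λ i j) (X Y : Matrix (Fin p) (Fin p) ℝ) :
    norm1 Λ (X + Y) ≤ norm1 Λ X + norm1 Λ Y := by
  simp only [norm1, ← Finset.sum_add_distrib, ← mul_add]
  exact Finset.sum_le_sum fun i _ => Finset.sum_le_sum fun j _ =>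
    mul_le_mul_of_nonneg_left (abs_add_le _ _) (hΛ i j)

theorem convexOn_norm1 (hΛ : ∀ i j, 0 ≤ Λ i j) : ConvexOn ℝ univ (norm1 Λ) :=
  ⟨convex_univ, fun X _ Y _ a b ha hb _ => by
    simpa only [norm1_smul _ _ ha, norm1_smul _ _ hb, smul_eq_mul] using
      norm1_add_le hΛ (a • X) (b • Y)⟩

theorem continuous_norm1 (Λ : Matrix (Fin p) (Fin p) ℝ) : Continuous (norm1 Λ) :=
  continuous_finsetSum _ fun i _ => continuous_finsetSum _ fun j _ =>
    continuous_const.mul (continuous_id.matrix_elem i j).abs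

theorem trace_mul_add_norm1_pos (hS : S.PosSemidef) (hSd : ∀ i, 0 < S i i)
    (hΛoff : ∀ i j, i ≠ j → 0 < Λ i j) (hΛ : ∀ i j, 0 ≤ Λ i j) {X : Matrix (Fin p) (Fin p) ℝ}
    (hX : X.PosSemidef) (hX0 : X ≠ 0) : 0 < (S * X).trace + norm1 Λ X := by
  by_cases hdiag : X.IsDiag
  · obtain ⟨i, hi⟩ : ∃ i, X i i ≠ 0 := by
      by_contra! h
      exact hX0 (by rw [← hdiag.diagonal_diag, show X.diag = 0 from funext h]; simp)
    have htrace : 0 < (S * X).trace := by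
      rw [← hdiag.diagonal_diag]
      simp only [trace, diag_apply, mul_diagonal]
      exact Finset.sum_pos' (fun k _ => mul_nonneg (hSd k).le hX.diag_nonneg)
        ⟨i, Finset.mem_univ i, mul_pos (hSd i) (hX.diag_nonneg.lt_of_ne' hi)⟩
    exact add_pos_of_pos_of_nonneg htrace (norm1_nonneg hΛ X)
  · obtain ⟨i, j, hij, hXij⟩ : ∃ i j, i ≠ j ∧ X i j ≠ 0 := by
      simpa [IsDiag, Pairwise] using hdiag
    have hnorm : 0 < norm1 Λ X :=
      Finset.sum_pos' (fun k _ => Finset.sum_nonneg fun l _ => mul_nonneg (hΛ k l) (abs_nonneg _))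
        ⟨i, Finset.mem_univ i, Finset.sum_pos'
          (fun l _ => mul_nonneg (hΛ i l) (abs_nonneg _))
          ⟨j, Finset.mem_univ j, mul_pos (hΛoff i j hij) (abs_pos.2 hXij)⟩⟩
    exact add_pos_of_nonneg_of_pos (hS.trace_mul_nonneg hX) hnorm

theorem strictConvexOn_fobj (hΛ : ∀ i j, 0 ≤ Λ i j) :
    StrictConvexOn ℝ {X : Matrix (Fin p) (Fin p) ℝ | X.PosDef} (fobj S Λ) := by
  have htrace : ConvexOn ℝ {X : Matrix (Fin p) (Fin p) ℝ | X.PosDef} fun X => (S * X).trace :=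
    ((traceLinearMap (Fin p) ℝ ℝ).comp (LinearMap.mulLeft ℝ S)).convexOn convex_setOf_posDef
  have hfobj : fobj S Λ = (fun X => -log X.det) + ((fun X => (S * X).trace) + norm1 Λ) := by
    ext X
    simp [fobj, add_assoc]
  rw [hfobj]
  exact strictConcaveOn_log_det.neg.add_convexOn
    (htrace.add ((convexOn_norm1 hΛ).subset (subset_univ _) convex_setOf_posDef))

attribute [local instance] Matrix.normedAddCommGroup Matrix.normedSpace

theorem exists_pos_mul_norm_le_trace_mul_add_norm1 (hS : S.PosSemidef) (hSd : ∀ i, 0 < S i i)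
    (hΛoff : ∀ i j, i ≠ j → 0 < Λ i j) (hΛ : ∀ i j, 0 ≤ Λ i j) :
    ∃ c, 0 < c ∧ ∀ X : Matrix (Fin p) (Fin p) ℝ, X.PosSemidef →
      c * ‖X‖ ≤ (S * X).trace + norm1 Λ X :=
  exists_pos_mul_norm_le_of_homogeneous isClosed_setOf_posSemidef
    (fun X (hX : X.PosSemidef) _ ht => hX.smul ht.le)
    ((continuous_const.matrix_mul continuous_id).matrix_trace.add (continuous_norm1 Λ))
    (fun X t ht => by simp [trace_smul, norm1_smul Λ X ht, mul_add])
    fun _ hX hX0 => trace_mul_add_norm1_pos hS hSd hΛoff hΛ hX hX0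

theorem exp_neg_le_det_of_fobj_le (hS : S.PosSemidef) (hΛ : ∀ i j, 0 ≤ Λ i j) {F : ℝ}
    {X : Matrix (Fin p) (Fin p) ℝ} (hX : X.PosDef) (hXF : fobj S Λ X ≤ F) : exp (-F) ≤ X.det := by
  rw [← le_log_iff_exp_le hX.det_pos]
  have htrace := hS.trace_mul_nonneg hX.posSemidef
  have hnorm1 := norm1_nonneg hΛ X
  unfold fobj at hXF
  linarith

theorem exists_norm_le_of_fobj_le {c : ℝ} (hc : 0 < c)
    (hcoer : ∀ X : Matrix (Fin p) (Fin p) ℝ, X.PosSemidef → c * ‖X‖ ≤ (S * X).trace + norm1 Λ X)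
    (F : ℝ) : ∃ R, ∀ X : Matrix (Fin p) (Fin p) ℝ, X.PosDef → fobj S Λ X ≤ F → ‖X‖ ≤ R := by
  -- small enough that `log det X ≤ a p ‖X‖ + const` eats at most half of `c ‖X‖`
  set a := c / (2 * (p + 1))
  have ha : 0 < a := by positivity
  have hap : a * p ≤ c / 2 := by
    rw [div_mul_eq_mul_div, div_le_div_iff₀ (by positivity) two_pos]
    nlinarith
  refine ⟨2 * (F - p * (1 + log a)) / c, fun X hX hXF => ?_⟩
  have hlog := hX.log_det_le ha
  have htrace := trace_le_card_mul_norm X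
  simp only [Fintype.card_fin] at hlog htrace
  have hcX := hcoer X hX.posSemidef
  have htrace' := mul_le_mul_of_nonneg_left htrace ha.le
  have hap' := mul_le_mul_of_nonneg_right hap (norm_nonneg X)
  unfold fobj at hXF
  rw [le_div_iff₀ hc]
  linarith

theorem exists_isMinOn_fobj (hS : S.PosSemidef) (hSd : ∀ i, 0 < S i i)
    (hΛoff : ∀ i j, i ≠ j → 0 < Λ i j) (hΛ : ∀ i j, 0 ≤ Λ i j) :
    ∃ X ∈ {X : Matrix (Fin p) (Fin p) ℝ | X.PosDef}, IsMinOn (fobj S Λ) {X | X.PosDef} X := by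
  obtain ⟨c, hc, hcoer⟩ := exists_pos_mul_norm_le_trace_mul_add_norm1 hS hSd hΛoff hΛ
  set F := fobj S Λ 1
  obtain ⟨R, hR⟩ := exists_norm_le_of_fobj_le hc hcoer F
  set K := {X : Matrix (Fin p) (Fin p) ℝ | X.PosSemidef ∧ ‖X‖ ≤ R ∧ exp (-F) ≤ X.det}
  have hK : IsCompact K := by
    refine Metric.isCompact_of_isClosed_isBounded ?_
      ((Metric.isBounded_closedBall (x := 0) (r := R)).subset fun X hX => ?_)
    · simp only [K, Set.ofPred_and]
      exact isClosed_setOf_posSemidef.inter ((isClosed_le continuous_norm continuous_const).inter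
        (isClosed_le continuous_const (continuous_id.matrix_det)))
    · exact mem_closedBall_zero_iff.2 hX.2.1
  have hKdet : ∀ X ∈ K, X.det ≠ 0 := fun X hX => (exp_pos _).trans_le hX.2.2 |>.ne'
  refine exists_isMinOn_of_isCompact_of_sublevel_subset hK
    (fun X hX => hX.1.posDef_iff_det_ne_zero.2 (hKdet X hX)) ?_ PosDef.one
    fun X hX hXF => ⟨hX.posSemidef, hR X hX hXF, exp_neg_le_det_of_fobj_le hS hΛ hX hXF⟩
  exact ((continuous_id.matrix_det.continuousOn.log hKdet).neg.add
    (continuous_const.matrix_mul continuous_id).matrix_trace.continuousOn).add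
    (continuous_norm1 Λ).continuousOn

end Objective

theorem exists_unique_minimizer_general {p : ℕ} (S Λ : Matrix (Fin p) (Fin p) ℝ)
    (hS : S.PosSemidef) (hSd : ∀ i, 0 < S i i)
    (hΛoff : ∀ i j, i ≠ j → 0 < Λ i j) (hΛd : ∀ i, 0 ≤ Λ i i) :
    ∃! Xstar : Matrix (Fin p) (Fin p) ℝ, Xstar.PosDef ∧
      ∀ Y : Matrix (Fin p) (Fin p) ℝ, Y.PosDef → fobj S Λ Xstar ≤ fobj S Λ Y := by
  have hΛ : ∀ i j, 0 ≤ Λ i j := fun i j =>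
    (eq_or_ne i j).elim (fun h => h ▸ hΛd i) fun h => (hΛoff i j h).le
  obtain ⟨X, hX, hmin⟩ := exists_isMinOn_fobj hS hSd hΛoff hΛ
  exact ⟨X, ⟨hX, fun Y hY => hmin hY⟩, fun Y ⟨hY, hYmin⟩ =>
    (strictConvexOn_fobj hΛ).eq_of_isMinOn (fun Z hZ => hYmin Z hZ) hmin hY hX⟩

/-- If `S ⪰ 0` has positive diagonal and `Λ` has positive
off-diagonal entries (nonnegative diagonal), then
`f(X) = −log det X + tr(SX) + ‖X‖_{1,Λ}` has a unique minimizer over the cone of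
symmetric positive definite matrices. -/
theorem exists_unique_minimizer {p : ℕ} (S Λ : Matrix (Fin p) (Fin p) ℝ)
    (hS : S.PosSemidef) (hSd : ∀ i, 0 < S i i)
    (hΛs : Λ.IsSymm) (hΛoff : ∀ i j, i ≠ j → 0 < Λ i j) (hΛd : ∀ i, 0 ≤ Λ i i) :
    ∃! Xstar : Matrix (Fin p) (Fin p) ℝ, Xstar.PosDef ∧
      ∀ Y : Matrix (Fin p) (Fin p) ℝ, Y.PosDef → fobj S Λ Xstar ≤ fobj S Λ Y :=
  exists_unique_minimizer_general S Λ hS hSd hΛoff hΛd
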